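/- The 18 maps N_{i,1} := T_i, N_{i,2} := (λ_{i+2} − λ_{i+1})·T_i, N_{i,3} := (λ_{i+2} − λ_{i+1})²·T_i, B_{i,1} := λ_i·T_i, B_{i,2} := λ_i λ_{i+1}·T_i, B_{i,3} := λ_i λ_{i+2}·T_i (i = 1,2,3, indices modulo 3) form a basis of the real vector space of all maps ℝ² → 𝕊 whose entries are polynomials of total degree at most 2. -/

import Mathlib

open Matrix

noncomputable section

/-- `n i` is the outward unit normal on the edge `e_i = [x_{i+1}, x_{i+2}]`. -/
def IsOuterNormal (x n : Fin 3 → Fin 2 → ℝ) : Prop :=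
  ∀ i : Fin 3, n i ⬝ᵥ n i = 1 ∧ n i ⬝ᵥ (x (i + 2) - x (i + 1)) = 0 ∧
    0 < n i ⬝ᵥ (x (i + 1) - x i)

/-- A real-valued function on the plane given by a polynomial of total degree at most 2. -/
def IsPolyDeg2 (f : (Fin 2 → ℝ) → ℝ) : Prop :=
  ∃ p : MvPolynomial (Fin 2) ℝ, p.totalDegree ≤ 2 ∧ ∀ y, f y = MvPolynomial.eval y p

/-- Membership in the space `P²(T; 𝕊)` of symmetric-matrix-valued maps whose entries
are polynomials of total degree at most 2. -/
def MemP2S (τ : (Fin 2 → ℝ) → Matrix (Fin 2) (Fin 2) ℝ) : Prop :=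
  (∀ y, (τ y)ᵀ = τ y) ∧ (∀ k l : Fin 2, IsPolyDeg2 fun y => τ y k l)

/-- The symmetric part `sym(A) = (A + Aᵀ)/2`. -/
def symPart (A : Matrix (Fin 2) (Fin 2) ℝ) : Matrix (Fin 2) (Fin 2) ℝ :=
  (1 / 2 : ℝ) • (A + Aᵀ)

/-- `T_i = sym(t_{i+1} t_{i+2}ᵀ) / ((n_i·t_{i+1})(n_i·t_{i+2}))`. -/
def TT (t n : Fin 3 → Fin 2 → ℝ) (i : Fin 3) : Matrix (Fin 2) (Fin 2) ℝ :=
  ((n i ⬝ᵥ t (i + 1)) * (n i ⬝ᵥ t (i + 2)))⁻¹ • symPart (vecMulVec (t (i + 1)) (t (i + 2)))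

/-- The eighteen maps `N_{i,1}, N_{i,2}, N_{i,3}, B_{i,1}, B_{i,2}, B_{i,3}` (`i = 0,1,2`),
indexed by `Fin 3 × Fin 6` (second component: `0 ↦ N_{i,1}`, `1 ↦ N_{i,2}`, `2 ↦ N_{i,3}`,
`3 ↦ B_{i,1}`, `4 ↦ B_{i,2}`, `5 ↦ B_{i,3}`). -/
def famP2 (lam : Fin 3 → (Fin 2 → ℝ) → ℝ) (t n : Fin 3 → Fin 2 → ℝ) :
    Fin 3 × Fin 6 → (Fin 2 → ℝ) → Matrix (Fin 2) (Fin 2) ℝ := fun p y =>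
  if p.2 = 0 then TT t n p.1
  else if p.2 = 1 then (lam (p.1 + 2) y - lam (p.1 + 1) y) • TT t n p.1
  else if p.2 = 2 then (lam (p.1 + 2) y - lam (p.1 + 1) y) ^ 2 • TT t n p.1
  else if p.2 = 3 then lam p.1 y • TT t n p.1
  else if p.2 = 4 then (lam p.1 y * lam (p.1 + 1) y) • TT t n p.1
  else (lam p.1 y * lam (p.1 + 2) y) • TT t n p.1

/-!
With `ℓ_j(A) := n_jᵀ A n_j`, the relations `n_j ⟂ t_j` give `ℓ_j(T_i) = δ_ij`, and a symmetric
`2 × 2` matrix is determined by `ℓ_0, ℓ_1, ℓ_2` because the normals are pairwise independent;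
hence every symmetric `A` equals `∑ ℓ_i(A) T_i`. So `τ ↦ (ℓ_i ∘ τ)_i` identifies `P²(T; 𝕊)` with
three copies of the scalar space `P²`, the maps `N_{i,·}, B_{i,·}` going to the six functions
`1, λ_{i+2} - λ_{i+1}, (λ_{i+2} - λ_{i+1})², λ_i, λ_i λ_{i+1}, λ_i λ_{i+2}` in slot `i`. These six
span `P²`, which is spanned by the products `λ_u λ_v` (as `1 = ∑ λ_u` and `y = ∑ λ_u(y) x_u`),
and they are independent, as evaluation at the vertices and edge midpoints shows.
-/

section PolyFunctions

variable (σ : Type*)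

def polyFunctions (d : ℕ) : Submodule ℝ ((σ → ℝ) → ℝ) :=
  (MvPolynomial.restrictTotalDegree σ ℝ d).map
    (MvPolynomial.aeval fun k (y : σ → ℝ) => y k).toLinearMap

variable {σ}

lemma aeval_coord_apply (p : MvPolynomial σ ℝ) (y : σ → ℝ) :
    MvPolynomial.aeval (fun k (y : σ → ℝ) => y k) p y = MvPolynomial.eval y p := by
  induction p using MvPolynomial.induction_on <;> simp_all

lemma isPolyDeg2_iff_mem_polyFunctions {f : (Fin 2 → ℝ) → ℝ} :
    IsPolyDeg2 f ↔ f ∈ polyFunctions (Fin 2) 2 := by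
  simp only [IsPolyDeg2, polyFunctions, Submodule.mem_map, MvPolynomial.mem_restrictTotalDegree,
    AlgHom.toLinearMap_apply, funext_iff, aeval_coord_apply, eq_comm (a := f _)]

lemma one_mem_polyFunctions (d : ℕ) : (1 : (σ → ℝ) → ℝ) ∈ polyFunctions σ d :=
  ⟨1, by simp [MvPolynomial.mem_restrictTotalDegree], by simp⟩

lemma coord_mem_polyFunctions_one (k : σ) : (fun y : σ → ℝ => y k) ∈ polyFunctions σ 1 :=
  ⟨MvPolynomial.X k, by simp [MvPolynomial.mem_restrictTotalDegree], by simp⟩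

lemma mem_polyFunctions_one_of_affine [Fintype σ] {f : (σ → ℝ) → ℝ} {g : σ → ℝ} {c : ℝ}
    (hf : ∀ y, f y = g ⬝ᵥ y + c) : f ∈ polyFunctions σ 1 := by
  have : f = ∑ k, g k • (fun y : σ → ℝ => y k) + c • 1 := by
    funext y; simp [hf, dotProduct, Finset.sum_apply]
  rw [this]
  exact add_mem (sum_mem fun k _ => Submodule.smul_mem _ _ (coord_mem_polyFunctions_one k))
    (Submodule.smul_mem _ _ (one_mem_polyFunctions 1))

lemma polyFunctions_mul_le (a b : ℕ) :
    polyFunctions σ a * polyFunctions σ b ≤ polyFunctions σ (a + b) := by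
  refine Submodule.mul_le.mpr ?_
  rintro _ ⟨p, hp, rfl⟩ _ ⟨q, hq, rfl⟩
  refine ⟨p * q, ?_, by simp⟩
  rw [SetLike.mem_coe, MvPolynomial.mem_restrictTotalDegree] at *
  exact (MvPolynomial.totalDegree_mul p q).trans (add_le_add hp hq)

lemma Submodule.prod_pow_mem_pow {ι A : Type*} [CommSemiring A] [Algebra ℝ A]
    {M : Submodule ℝ A} {v : ι → A} (hv : ∀ i, v i ∈ M) (s : Finset ι) (e : ι → ℕ) :
    ∏ i ∈ s, v i ^ e i ∈ M ^ ∑ i ∈ s, e i := by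
  classical
  induction s using Finset.induction_on with
  | empty =>
    rw [Finset.prod_empty, Finset.sum_empty, pow_zero]
    exact Submodule.one_le.mp le_rfl
  | insert i s hi ih =>
    rw [Finset.prod_insert hi, Finset.sum_insert hi, pow_add]
    exact Submodule.mul_mem_mul (Submodule.pow_mem_pow _ (hv i) _) ih

lemma polyFunctions_le_pow {M : Submodule ℝ ((σ → ℝ) → ℝ)} (h1 : 1 ∈ M)
    (hX : ∀ k, (fun y : σ → ℝ => y k) ∈ M) (d : ℕ) : polyFunctions σ d ≤ M ^ d := by
  rintro _ ⟨p, hp, rfl⟩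
  rw [SetLike.mem_coe, MvPolynomial.mem_restrictTotalDegree] at hp
  rw [AlgHom.toLinearMap_apply, p.as_sum, map_sum]
  refine sum_mem fun m hm => ?_
  rw [MvPolynomial.aeval_monomial, ← Algebra.smul_def]
  exact Submodule.smul_mem _ _ <| pow_le_pow_right' (Submodule.one_le.mpr h1)
    ((MvPolynomial.le_totalDegree hm).trans hp) (Submodule.prod_pow_mem_pow hX _ _)

end PolyFunctions

section BaryQuadratics

variable {A : Type*} [CommRing A] [Algebra ℝ A]

/-- With `a, b, c = λ_i, λ_{i+1}, λ_{i+2}` these are the scalar factors of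
`N_{i,1}, N_{i,2}, N_{i,3}, B_{i,1}, B_{i,2}, B_{i,3}`. -/
def baryQuadratics (a b c : A) : Fin 6 → A :=
  ![1, c - b, (c - b) ^ 2, a, a * b, a * c]

lemma baryQuadratics_mem_mul {M : Submodule ℝ A} {a b c : A} (h1 : 1 ∈ M) (ha : a ∈ M)
    (hb : b ∈ M) (hc : c ∈ M) (j : Fin 6) : baryQuadratics a b c j ∈ M * M := by
  have hcb : c - b ∈ M := sub_mem hc hb
  fin_cases j
  · simpa [baryQuadratics] using Submodule.mul_mem_mul h1 h1
  · simpa [baryQuadratics] using Submodule.mul_mem_mul hcb h1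
  · simpa [baryQuadratics, sq] using Submodule.mul_mem_mul hcb hcb
  · simpa [baryQuadratics] using Submodule.mul_mem_mul ha h1
  · exact Submodule.mul_mem_mul ha hb
  · exact Submodule.mul_mem_mul ha hc

lemma span_le_span_one_sub {a b c : A} (h : a + b + c = 1) :
    Submodule.span ℝ {a, b, c} ≤ Submodule.span ℝ {1, a, c - b} := by
  have h2 : ∀ x : A, (2 : ℝ) • x ∈ Submodule.span ℝ {1, a, c - b} →
      x ∈ Submodule.span ℝ {1, a, c - b} :=
    fun x => (Submodule.smul_mem_iff _ two_ne_zero).mp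
  have h1 : (1 : A) ∈ Submodule.span ℝ {1, a, c - b} := Submodule.subset_span (by simp)
  have ha : a ∈ Submodule.span ℝ {1, a, c - b} := Submodule.subset_span (by simp)
  have hd : c - b ∈ Submodule.span ℝ {1, a, c - b} := Submodule.subset_span (by simp)
  rw [Submodule.span_le, Set.insert_subset_iff, Set.insert_subset_iff, Set.singleton_subset_iff]
  refine ⟨ha, ?_, ?_⟩
  · refine h2 _ ?_
    have : (2 : ℝ) • b = 1 - a - (c - b) := by rw [two_smul]; linear_combination h
    rw [this]
    exact sub_mem (sub_mem h1 ha) hd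
  · refine h2 _ ?_
    have : (2 : ℝ) • c = 1 - a + (c - b) := by rw [two_smul]; linear_combination h
    rw [this]
    exact add_mem (sub_mem h1 ha) hd

lemma span_mul_span_le_span_baryQuadratics {a b c : A} (h : a + b + c = 1) :
    Submodule.span ℝ {a, b, c} * Submodule.span ℝ {a, b, c} ≤
      Submodule.span ℝ (Set.range (baryQuadratics a b c)) := by
  set S := Submodule.span ℝ (Set.range (baryQuadratics a b c))
  have hφ : ∀ j, baryQuadratics a b c j ∈ S := fun j => Submodule.subset_span ⟨j, rfl⟩
  have h1 : (1 : A) ∈ S := hφ 0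
  have ha : a ∈ S := hφ 3
  have hd : c - b ∈ S := hφ 1
  have haa : a * a ∈ S := by
    have e : a * a = a - a * b - a * c := by linear_combination a * h
    rw [e]
    exact sub_mem (sub_mem (hφ 3) (hφ 4)) (hφ 5)
  have had : a * (c - b) ∈ S := by
    rw [mul_sub]
    exact sub_mem (hφ 5) (hφ 4)
  have hdd : (c - b) * (c - b) ∈ S := by simpa [baryQuadratics, sq] using hφ 2
  refine (mul_le_mul' (span_le_span_one_sub h) (span_le_span_one_sub h)).trans ?_
  rw [Submodule.span_mul_span, Submodule.span_le]
  rintro _ ⟨p, hp, q, hq, rfl⟩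
  simp only [Set.mem_insert_iff, Set.mem_singleton_iff] at hp hq
  rcases hp with hp | hp | hp <;> rcases hq with hq | hq | hq <;> rw [hp, hq] <;>
    simpa only [one_mul, mul_one, mul_comm (c - b) a]

lemma linearIndependent_baryQuadratics {X : Type*} {a b c : X → ℝ}
    (h : ∀ s t u : ℝ, s + t + u = 1 → ∃ z, a z = s ∧ b z = t ∧ c z = u) :
    LinearIndependent ℝ (baryQuadratics a b c) := by
  rw [Fintype.linearIndependent_iff]
  intro w hw
  have eval : ∀ s t u : ℝ, s + t + u = 1 →
      w 0 + w 1 * (u - t) + w 2 * (u - t) ^ 2 + w 3 * s + w 4 * (s * t) + w 5 * (s * u) = 0 := by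
    intro s t u hstu
    obtain ⟨z, rfl, rfl, rfl⟩ := h s t u hstu
    simpa [Fin.sum_univ_six, baryQuadratics] using congr_fun hw z
  have e1 := eval 1 0 0 (by norm_num)
  have e2 := eval 0 1 0 (by norm_num)
  have e3 := eval 0 0 1 (by norm_num)
  have e4 := eval 0 (1 / 2) (1 / 2) (by norm_num)
  have e5 := eval (1 / 2) (1 / 2) 0 (by norm_num)
  have e6 := eval (1 / 2) 0 (1 / 2) (by norm_num)
  intro j
  fin_cases j <;> simp only [Fin.zero_eta, Fin.mk_one, Fin.reduceFinMk] <;> linarith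

end BaryQuadratics

section Biorthogonal

variable {X M ι κ : Type*} [AddCommGroup M] [Module ℝ M] [Fintype ι] [Fintype κ]

lemma linearIndependent_fun_smul_of_biorthogonal [DecidableEq ι] {T : ι → M} {ℓ : ι → M →ₗ[ℝ] ℝ}
    (hℓ : ∀ i j, ℓ j (T i) = if i = j then 1 else 0) {φ : ι → κ → X → ℝ}
    (hφ : ∀ i, LinearIndependent ℝ (φ i)) :
    LinearIndependent ℝ (fun p : ι × κ => fun y => φ p.1 p.2 y • T p.1) := by
  rw [Fintype.linearIndependent_iff]
  rintro c hc ⟨i, j⟩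
  refine Fintype.linearIndependent_iff.mp (hφ i) (fun j => c (i, j)) ?_ j
  funext y
  simpa [Finset.sum_apply, Fintype.sum_prod_type, hℓ] using congrArg (ℓ i) (congr_fun hc y)

lemma exists_eq_sum_fun_smul {T : ι → M} {ℓ : ι → M →ₗ[ℝ] ℝ} {φ : ι → κ → X → ℝ} {τ : X → M}
    (hτ : ∀ y, τ y = ∑ i, ℓ i (τ y) • T i)
    (hspan : ∀ i, (fun y => ℓ i (τ y)) ∈ Submodule.span ℝ (Set.range (φ i))) :
    ∃ c : ι × κ → ℝ, τ = ∑ p, c p • fun y => φ p.1 p.2 y • T p.1 := by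
  choose d hd using fun i => (Submodule.mem_span_range_iff_exists_fun ℝ).mp (hspan i)
  refine ⟨fun p => d p.1 p.2, funext fun y => ?_⟩
  have hd' : ∀ i, ℓ i (τ y) = ∑ j, d i j * φ i j y := fun i => by
    simpa [Finset.sum_apply] using (congr_fun (hd i) y).symm
  rw [hτ y]
  simp [hd', Finset.sum_apply, Fintype.sum_prod_type, Finset.sum_smul, smul_smul]

end Biorthogonal

section QuadForm

variable {m R : Type*} [Fintype m] [CommSemiring R]

def quadFormAt (v : m → R) : Matrix m m R →ₗ[R] R where
  toFun A := v ⬝ᵥ A *ᵥ v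
  map_add' A B := by simp [Matrix.add_mulVec, dotProduct_add]
  map_smul' r A := by simp [Matrix.smul_mulVec, dotProduct_smul]

lemma quadFormAt_apply (v : m → R) (A : Matrix m m R) : quadFormAt v A = v ⬝ᵥ A *ᵥ v := rfl

end QuadForm

lemma quadFormAt_eq_sum (v : Fin 2 → ℝ) (A : Matrix (Fin 2) (Fin 2) ℝ) :
    quadFormAt v A = ∑ k, ∑ l, (v k * v l) * A k l := by
  simp only [quadFormAt_apply, dotProduct, mulVec, Fin.sum_univ_two]
  ring

lemma quadFormAt_symPart_vecMulVec (w u v : Fin 2 → ℝ) :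
    quadFormAt w (symPart (vecMulVec u v)) = (w ⬝ᵥ u) * (w ⬝ᵥ v) := by
  simp only [symPart, vecMulVec, smul_add, smul_of, quadFormAt_apply, dotProduct, mulVec,
    Matrix.add_apply, of_apply, Pi.smul_apply, smul_eq_mul, Matrix.smul_apply, transpose_apply,
    Fin.sum_univ_two]
  ring

/-- In the unknowns `A 0 0, A 0 1, A 1 1` the hypotheses form a `3 × 3` linear system whose
determinant is twice the product of the three `2 × 2` determinants. -/
lemma eq_zero_of_quadFormAt_eq_zero {u : Fin 3 → Fin 2 → ℝ}
    (hu : ∀ i j, i ≠ j → det (of ![u i, u j]) ≠ 0) {A : Matrix (Fin 2) (Fin 2) ℝ} (hA : Aᵀ = A)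
    (h : ∀ j, quadFormAt (u j) A = 0) : A = 0 := by
  have hA10 : A 1 0 = A 0 1 := by simpa using congr_fun (congr_fun hA 0) 1
  set M : Matrix (Fin 3) (Fin 3) ℝ := of fun j => ![u j 0 ^ 2, 2 * (u j 0 * u j 1), u j 1 ^ 2]
  have hM : M.det = 2 * det (of ![u 0, u 1]) * det (of ![u 0, u 2]) * det (of ![u 1, u 2]) := by
    simp only [M, det_fin_three, det_fin_two, of_apply, cons_val_zero, cons_val_one, cons_val]
    ring
  have hv := eq_zero_of_mulVec_eq_zero (v := ![A 0 0, A 0 1, A 1 1]) (M := M)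
    (hM ▸ mul_ne_zero (mul_ne_zero (mul_ne_zero two_ne_zero (hu 0 1 (by decide)))
      (hu 0 2 (by decide))) (hu 1 2 (by decide))) (by
      funext j
      have := h j
      simp only [quadFormAt_apply, dotProduct, mulVec, Fin.sum_univ_two, Fin.sum_univ_three, hA10,
        M, of_apply, cons_val_zero, cons_val_one, cons_val, Pi.zero_apply] at this ⊢
      linarith)
  have h00 : A 0 0 = 0 := congr_fun hv 0
  have h01 : A 0 1 = 0 := congr_fun hv 1
  have h11 : A 1 1 = 0 := congr_fun hv 2
  ext k l
  fin_cases k <;> fin_cases l <;> simp [h00, h01, h11, hA10]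

lemma Fin.eq_self_or_add_one_or_add_two (i v : Fin 3) : v = i ∨ v = i + 1 ∨ v = i + 2 := by
  revert i v; decide

lemma Fin.sum_univ_three_rotate {M : Type*} [AddCommMonoid M] (f : Fin 3 → M) (i : Fin 3) :
    ∑ v, f v = f i + f (i + 1) + f (i + 2) := by
  rw [← Equiv.sum_comp (Equiv.addLeft i), Fin.sum_univ_three]
  simp

lemma Set.range_fin_three_rotate {α : Type*} (f : Fin 3 → α) (i : Fin 3) :
    Set.range f = {f i, f (i + 1), f (i + 2)} := by
  ext a
  simp only [Set.mem_range, Set.mem_insert_iff, Set.mem_singleton_iff]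
  constructor
  · rintro ⟨v, rfl⟩
    rcases Fin.eq_self_or_add_one_or_add_two i v with rfl | rfl | rfl <;> simp
  · rintro (rfl | rfl | rfl) <;> exact ⟨_, rfl⟩

lemma apply_sum_smul_of_affine {ι m : Type*} [Fintype ι] [Fintype m] {f : (m → ℝ) → ℝ}
    {g : m → ℝ} {c : ℝ} (hf : ∀ y, f y = g ⬝ᵥ y + c) (p : ι → m → ℝ) {w : ι → ℝ}
    (hw : ∑ u, w u = 1) : f (∑ u, w u • p u) = ∑ u, w u * f (p u) := by
  simp only [hf, dotProduct_sum, dotProduct_smul, smul_eq_mul, mul_add, Finset.sum_add_distrib,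
    ← Finset.sum_mul, hw, one_mul]

section Triangle

variable {x : Fin 3 → Fin 2 → ℝ}

def triangleBasis (hx : AffineIndependent ℝ x) : AffineBasis (Fin 3) ℝ (Fin 2 → ℝ) :=
  ⟨x, hx, hx.affineSpan_eq_top_iff_card_eq_finrank_add_one.mpr (by simp)⟩

lemma eq_zero_of_dotProduct_sub_eq_zero (hx : AffineIndependent ℝ x) {w : Fin 2 → ℝ}
    (h : ∀ i j, w ⬝ᵥ (x j - x i) = 0) : w = 0 := by
  set b := triangleBasis hx
  have hconst : ∀ y, w ⬝ᵥ y = w ⬝ᵥ x 0 := fun y => by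
    have hvert : ∀ u, w ⬝ᵥ b u = w ⬝ᵥ x 0 := fun u => by
      have := h 0 u
      rw [dotProduct_sub, sub_eq_zero] at this
      exact this
    conv_lhs => rw [← b.linear_combination_coord_eq_self y]
    simp only [dotProduct_sum, dotProduct_smul, smul_eq_mul, hvert, ← Finset.sum_mul,
      b.sum_coord_apply_eq_one, one_mul]
  have := (hconst w).trans (hconst 0).symm
  rwa [dotProduct_zero, dotProduct_self_eq_zero] at this

lemma eq_zero_of_dotProduct_edge_eq_zero (hx : AffineIndependent ℝ x) {i j : Fin 3}
    (hij : i ≠ j) {w : Fin 2 → ℝ} (hi : w ⬝ᵥ (x (i + 2) - x (i + 1)) = 0)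
    (hj : w ⬝ᵥ (x (j + 2) - x (j + 1)) = 0) : w = 0 := by
  rw [dotProduct_sub, sub_eq_zero] at hi hj
  have hconst : ∀ a, w ⬝ᵥ x a = w ⬝ᵥ x 0 := by
    intro a
    fin_cases i <;> fin_cases j <;> fin_cases a <;> simp_all
  refine eq_zero_of_dotProduct_sub_eq_zero hx fun a b => ?_
  rw [dotProduct_sub, hconst a, hconst b, sub_self]

def IsBarycentricCoords (x : Fin 3 → Fin 2 → ℝ) (lam : Fin 3 → (Fin 2 → ℝ) → ℝ) : Prop :=
  (∀ i, ∃ (g : Fin 2 → ℝ) (c : ℝ), ∀ y, lam i y = g ⬝ᵥ y + c) ∧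
    ∀ i j, lam i (x j) = if i = j then (1 : ℝ) else 0

namespace IsBarycentricCoords

variable {lam : Fin 3 → (Fin 2 → ℝ) → ℝ}

lemma eq_coord (hlam : IsBarycentricCoords x lam) (hx : AffineIndependent ℝ x) (v : Fin 3) :
    lam v = (triangleBasis hx).coord v := by
  funext y
  obtain ⟨g, c, hg⟩ := hlam.1 v
  set b := triangleBasis hx
  conv_lhs => rw [← b.linear_combination_coord_eq_self y]
  rw [apply_sum_smul_of_affine hg _ (b.sum_coord_apply_eq_one y)]
  have hb : ∀ u, b u = x u := fun _ => rfl
  simp [hb, hlam.2]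

lemma sum_eq_one (hlam : IsBarycentricCoords x lam) (hx : AffineIndependent ℝ x) :
    ∑ v, lam v = 1 := by
  funext y
  simp [hlam.eq_coord hx, (triangleBasis hx).sum_coord_apply_eq_one]

lemma sum_smul_eq (hlam : IsBarycentricCoords x lam) (hx : AffineIndependent ℝ x)
    (y : Fin 2 → ℝ) : ∑ v, lam v y • x v = y := by
  simp_rw [hlam.eq_coord hx]
  exact (triangleBasis hx).linear_combination_coord_eq_self y

lemma exists_eq (hlam : IsBarycentricCoords x lam) (w : Fin 3 → ℝ) (hw : ∑ v, w v = 1) :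
    ∃ z, ∀ v, lam v z = w v := by
  refine ⟨∑ u, w u • x u, fun v => ?_⟩
  obtain ⟨g, c, hg⟩ := hlam.1 v
  simp [apply_sum_smul_of_affine hg _ hw, hlam.2]

lemma polyFunctions_two_le_span_baryQuadratics (hlam : IsBarycentricCoords x lam)
    (hx : AffineIndependent ℝ x) (i : Fin 3) :
    polyFunctions (Fin 2) 2 ≤
      Submodule.span ℝ (Set.range (baryQuadratics (lam i) (lam (i + 1)) (lam (i + 2)))) := by
  have hsum := hlam.sum_eq_one hx
  have h1 : (1 : (Fin 2 → ℝ) → ℝ) ∈ Submodule.span ℝ (Set.range lam) :=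
    hsum ▸ sum_mem fun v _ => Submodule.subset_span ⟨v, rfl⟩
  have hX : ∀ k, (fun y : Fin 2 → ℝ => y k) ∈ Submodule.span ℝ (Set.range lam) := fun k => by
    have : (fun y : Fin 2 → ℝ => y k) = ∑ v, x v k • lam v := funext fun y => by
      simpa [Finset.sum_apply, mul_comm] using (congr_fun (hlam.sum_smul_eq hx y) k).symm
    rw [this]
    exact sum_mem fun v _ => Submodule.smul_mem _ _ (Submodule.subset_span ⟨v, rfl⟩)
  refine (polyFunctions_le_pow h1 hX 2).trans ?_
  rw [sq, Set.range_fin_three_rotate lam i]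
  exact span_mul_span_le_span_baryQuadratics (by rw [← Fin.sum_univ_three_rotate, hsum])

lemma linearIndependent_baryQuadratics (hlam : IsBarycentricCoords x lam) (i : Fin 3) :
    LinearIndependent ℝ (baryQuadratics (lam i) (lam (i + 1)) (lam (i + 2))) := by
  refine _root_.linearIndependent_baryQuadratics fun r s u hrsu => ?_
  obtain ⟨z, hz⟩ := hlam.exists_eq (fun v => ![r, s, u] (v - i))
    (by simpa [Fin.sum_univ_three_rotate _ i] using hrsu)
  exact ⟨z, by simpa using hz i, by simpa using hz (i + 1), by simpa using hz (i + 2)⟩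

end IsBarycentricCoords

end Triangle

section Normals

variable {x t n : Fin 3 → Fin 2 → ℝ}

lemma IsOuterNormal.ne_zero (hn : IsOuterNormal x n) (i : Fin 3) : n i ≠ 0 := by
  intro h
  simpa [h] using (hn i).1

lemma IsOuterNormal.dotProduct_edge_ne_zero (hx : AffineIndependent ℝ x) (hn : IsOuterNormal x n)
    {i j : Fin 3} (hij : i ≠ j) : n i ⬝ᵥ (x (j + 2) - x (j + 1)) ≠ 0 :=
  fun h => hn.ne_zero i (eq_zero_of_dotProduct_edge_eq_zero hx hij (hn i).2.1 h)

lemma IsOuterNormal.det_ne_zero (hx : AffineIndependent ℝ x) (hn : IsOuterNormal x n)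
    {i j : Fin 3} (hij : i ≠ j) : det (of ![n i, n j]) ≠ 0 := by
  intro hdet
  obtain ⟨v, hv0, hv⟩ := exists_vecMul_eq_zero_iff.mpr hdet
  have hcomb : v 0 • n i + v 1 • n j = 0 := by
    rw [← hv]
    funext k
    simp [vecMul, dotProduct, Fin.sum_univ_two]
  have hdot : ∀ e, v 0 * (n i ⬝ᵥ e) + v 1 * (n j ⬝ᵥ e) = 0 := fun e => by
    simpa [add_dotProduct, smul_dotProduct] using congrArg (· ⬝ᵥ e) hcomb
  have h0 : v 0 = 0 := by
    have := hdot (x (j + 2) - x (j + 1))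
    rw [(hn j).2.1, mul_zero, add_zero] at this
    exact (mul_eq_zero.mp this).resolve_right (hn.dotProduct_edge_ne_zero hx hij)
  have h1 : v 1 = 0 := by
    have := hdot (x (i + 2) - x (i + 1))
    rw [(hn i).2.1, mul_zero, zero_add] at this
    exact (mul_eq_zero.mp this).resolve_right (hn.dotProduct_edge_ne_zero hx hij.symm)
  exact hv0 (funext fun k => by fin_cases k <;> assumption)

lemma dotProduct_normal_tangent_self (hx : AffineIndependent ℝ x) (hn : IsOuterNormal x n)
    (ht_par : ∀ i, ∃ c : ℝ, x (i + 2) - x (i + 1) = c • t i) (i : Fin 3) : n i ⬝ᵥ t i = 0 := by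
  have hedge : x (i + 2) - x (i + 1) ≠ 0 :=
    sub_ne_zero.mpr (hx.injective.ne (by fin_cases i <;> decide))
  obtain ⟨c, hc⟩ := ht_par i
  have := (hn i).2.1
  rw [hc, dotProduct_smul, smul_eq_mul] at this
  exact (mul_eq_zero.mp this).resolve_left (by rintro rfl; simp [hc] at hedge)

lemma dotProduct_normal_tangent_ne_zero (hx : AffineIndependent ℝ x) (hn : IsOuterNormal x n)
    (ht_par : ∀ i, ∃ c : ℝ, x (i + 2) - x (i + 1) = c • t i) {i j : Fin 3} (hij : i ≠ j) :
    n i ⬝ᵥ t j ≠ 0 := by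
  obtain ⟨c, hc⟩ := ht_par j
  intro h
  apply hn.dotProduct_edge_ne_zero hx hij
  rw [hc, dotProduct_smul, h, smul_zero]

lemma transpose_TT (i : Fin 3) : (TT t n i)ᵀ = TT t n i := by
  rw [TT, transpose_smul, symPart, transpose_smul, transpose_add, transpose_transpose,
    add_comm (vecMulVec _ _)ᵀ]

lemma quadFormAt_TT (hx : AffineIndependent ℝ x) (hn : IsOuterNormal x n)
    (ht_par : ∀ i, ∃ c : ℝ, x (i + 2) - x (i + 1) = c • t i) (i j : Fin 3) :
    quadFormAt (n j) (TT t n i) = if i = j then 1 else 0 := by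
  rw [TT, map_smul, quadFormAt_symPart_vecMulVec, smul_eq_mul]
  split_ifs with hij
  · subst hij
    exact inv_mul_cancel₀ (mul_ne_zero
      (dotProduct_normal_tangent_ne_zero hx hn ht_par (by fin_cases i <;> decide))
      (dotProduct_normal_tangent_ne_zero hx hn ht_par (by fin_cases i <;> decide)))
  · rcases Fin.eq_self_or_add_one_or_add_two i j with rfl | rfl | rfl
    · exact absurd rfl hij
    · simp [dotProduct_normal_tangent_self hx hn ht_par]
    · simp [dotProduct_normal_tangent_self hx hn ht_par]

lemma eq_sum_quadFormAt_smul_TT (hx : AffineIndependent ℝ x) (hn : IsOuterNormal x n)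
    (ht_par : ∀ i, ∃ c : ℝ, x (i + 2) - x (i + 1) = c • t i) {A : Matrix (Fin 2) (Fin 2) ℝ}
    (hA : Aᵀ = A) : A = ∑ i, quadFormAt (n i) A • TT t n i := by
  rw [← sub_eq_zero]
  refine eq_zero_of_quadFormAt_eq_zero (fun i j hij => hn.det_ne_zero hx hij) ?_ fun j => ?_
  · simp only [transpose_sub, hA, transpose_sum, transpose_smul, transpose_TT]
  · simp [quadFormAt_TT hx hn ht_par]

end Normals

lemma famP2_eq (lam : Fin 3 → (Fin 2 → ℝ) → ℝ) (t n : Fin 3 → Fin 2 → ℝ) :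
    famP2 lam t n = fun p y =>
      baryQuadratics (lam p.1) (lam (p.1 + 1)) (lam (p.1 + 2)) p.2 y • TT t n p.1 := by
  funext ⟨i, j⟩ y
  fin_cases j <;> simp [famP2, baryQuadratics]

lemma baryQuadratics_mem_polyFunctions {lam : Fin 3 → (Fin 2 → ℝ) → ℝ}
    (hlam_affine : ∀ i, ∃ (g : Fin 2 → ℝ) (c : ℝ), ∀ y, lam i y = g ⬝ᵥ y + c) (i : Fin 3)
    (j : Fin 6) :
    baryQuadratics (lam i) (lam (i + 1)) (lam (i + 2)) j ∈ polyFunctions (Fin 2) 2 := by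
  have hlam : ∀ v, lam v ∈ polyFunctions (Fin 2) 1 := fun v => by
    obtain ⟨g, c, h⟩ := hlam_affine v
    exact mem_polyFunctions_one_of_affine h
  exact polyFunctions_mul_le 1 1
    (baryQuadratics_mem_mul (one_mem_polyFunctions 1) (hlam _) (hlam _) (hlam _) j)

lemma quadFormAt_comp_mem_polyFunctions {τ : (Fin 2 → ℝ) → Matrix (Fin 2) (Fin 2) ℝ}
    (hτ : ∀ k l, IsPolyDeg2 fun y => τ y k l) (v : Fin 2 → ℝ) :
    (fun y => quadFormAt v (τ y)) ∈ polyFunctions (Fin 2) 2 := by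
  have : (fun y => quadFormAt v (τ y)) = ∑ k, ∑ l, (v k * v l) • fun y => τ y k l := by
    funext y
    simp [quadFormAt_eq_sum, Finset.sum_apply]
  rw [this]
  exact sum_mem fun k _ => sum_mem fun l _ =>
    Submodule.smul_mem _ _ (isPolyDeg2_iff_mem_polyFunctions.mp (hτ k l))

lemma memP2S_famP2 {lam : Fin 3 → (Fin 2 → ℝ) → ℝ} {t n : Fin 3 → Fin 2 → ℝ}
    (hlam_affine : ∀ i, ∃ (g : Fin 2 → ℝ) (c : ℝ), ∀ y, lam i y = g ⬝ᵥ y + c)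
    (p : Fin 3 × Fin 6) : MemP2S (famP2 lam t n p) := by
  rw [famP2_eq]
  refine ⟨fun y => by rw [transpose_smul, transpose_TT], fun k l => ?_⟩
  rw [isPolyDeg2_iff_mem_polyFunctions]
  convert Submodule.smul_mem _ (TT t n p.1 k l)
    (baryQuadratics_mem_polyFunctions hlam_affine p.1 p.2) using 1
  funext y
  simp [mul_comm]

theorem basis_P2S_general
    (x t n : Fin 3 → Fin 2 → ℝ)
    (hx : AffineIndependent ℝ x)
    (hn : IsOuterNormal x n)
    (ht_par : ∀ i, ∃ c : ℝ, x (i + 2) - x (i + 1) = c • t i)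
    (lam : Fin 3 → (Fin 2 → ℝ) → ℝ)
    (hlam_affine : ∀ i, ∃ (g : Fin 2 → ℝ) (c : ℝ), ∀ y, lam i y = g ⬝ᵥ y + c)
    (hlam_val : ∀ i j, lam i (x j) = if i = j then (1 : ℝ) else 0) :
    (∀ p : Fin 3 × Fin 6, MemP2S (famP2 lam t n p)) ∧
    LinearIndependent ℝ (famP2 lam t n) ∧
    (∀ τ : (Fin 2 → ℝ) → Matrix (Fin 2) (Fin 2) ℝ, MemP2S τ →
      ∃ c : Fin 3 × Fin 6 → ℝ, τ = ∑ p : Fin 3 × Fin 6, c p • famP2 lam t n p) := by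
  have hlam : IsBarycentricCoords x lam := ⟨hlam_affine, hlam_val⟩
  set φ := fun i => baryQuadratics (lam i) (lam (i + 1)) (lam (i + 2))
  refine ⟨memP2S_famP2 hlam_affine, ?_, fun τ hτ => ?_⟩ <;> rw [famP2_eq]
  · exact linearIndependent_fun_smul_of_biorthogonal (φ := φ) (quadFormAt_TT hx hn ht_par)
      hlam.linearIndependent_baryQuadratics
  · exact exists_eq_sum_fun_smul (φ := φ) (ℓ := fun i => quadFormAt (n i))
      (fun y => eq_sum_quadFormAt_smul_TT hx hn ht_par (hτ.1 y))
      fun i => hlam.polyFunctions_two_le_span_baryQuadratics hx i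
        (quadFormAt_comp_mem_polyFunctions hτ.2 (n i))

/-- The eighteen maps `N_{i,j}, B_{i,j}` form a basis of the space of all maps
`ℝ² → 𝕊` whose entries are polynomials of total degree at most 2. -/
theorem basis_P2S
    (x t n : Fin 3 → Fin 2 → ℝ)
    (hx : AffineIndependent ℝ x)
    (hn : IsOuterNormal x n)
    (ht_unit : ∀ i, t i ⬝ᵥ t i = 1)
    (ht_par : ∀ i, ∃ c : ℝ, x (i + 2) - x (i + 1) = c • t i)
    (lam : Fin 3 → (Fin 2 → ℝ) → ℝ)
    (hlam_affine : ∀ i, ∃ (g : Fin 2 → ℝ) (c : ℝ), ∀ y, lam i y = g ⬝ᵥ y + c)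
    (hlam_val : ∀ i j, lam i (x j) = if i = j then (1 : ℝ) else 0) :
    (∀ p : Fin 3 × Fin 6, MemP2S (famP2 lam t n p)) ∧
    LinearIndependent ℝ (famP2 lam t n) ∧
    (∀ τ : (Fin 2 → ℝ) → Matrix (Fin 2) (Fin 2) ℝ, MemP2S τ →
      ∃ c : Fin 3 × Fin 6 → ℝ, τ = ∑ p : Fin 3 × Fin 6, c p • famP2 lam t n p) :=
  basis_P2S_general x t n hx hn ht_par lam hlam_affine hlam_val
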